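/- arXiv:2410.12551 — 3 statements merged into one kernel-verified Lean document; each statement's English description precedes it below -/
import Mathlib

section
/- Let S₁, …, S_m be pairwise commuting Hermitian involutions on a finite-dimensional complex Hilbert space, let P_r := ∏_{i=1}^m (I + (−1)^{r_i} S_i)/2 for r ∈ {0,1}^m, and let {I_u}_{u=1}^{χ} be a partition of the index set {1, …, m} into χ nonempty blocks. Define Ω_chr := (1/χ) Σ_{u=1}^{χ} ∏_{i ∈ I_u} (I + S_i)/2. Then for every r ∈ {0,1}^m, Ω_chr · P_r = λ_r · P_r with λ_r = (1/χ) · |{ u ∈ {1,…,χ} : r_i = 0 for all i ∈ I_u }|. -/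
open Matrix

/-- The syndrome projector `P_r = ∏_{i=1}^m (I + (-1)^{r i} S i)/2` associated with a family
of commuting Hermitian involutions `S` and a binary vector `r` (as an ordered product). -/
noncomputable def syndromeProj {d m : ℕ} (S : Fin m → Matrix (Fin d) (Fin d) ℂ)
    (r : Fin m → Bool) : Matrix (Fin d) (Fin d) ℂ :=
  ((List.finRange m).map (fun i => (2⁻¹ : ℂ) • (1 + (if r i then -S i else S i)))).prod

/-- given a partition `{I_u}_{u=1}^χ` of `{1,…,m}` into nonempty blocks, the
chromatic verification operator `Ω_chr = (1/χ) ∑_u ∏_{i ∈ I_u} (I + S i)/2` acts on each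
syndrome projector `P_r` as the scalar
`λ_r = (1/χ)·#{u : r_i = 0 for all i ∈ I_u}`. -/
theorem omegaChr_eigenvalue_on_syndrome {d m χ : ℕ} (hχ : 0 < χ)
    (S : Fin m → Matrix (Fin d) (Fin d) ℂ)
    (hherm : ∀ i, (S i).IsHermitian)
    (hinv : ∀ i, S i * S i = 1)
    (hcomm : ∀ i j, S i * S j = S j * S i)
    (I : Fin χ → Finset (Fin m))
    (hne : ∀ u, (I u).Nonempty)
    (hdisj : ∀ u v, u ≠ v → Disjoint (I u) (I v))
    (hcover : ∀ i, ∃ u, i ∈ I u)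
    (r : Fin m → Bool) :
    ((χ : ℂ)⁻¹ • ∑ u, ((I u).toList.map (fun i => (2⁻¹ : ℂ) • (1 + S i))).prod) *
        syndromeProj S r =
      ((((χ : ℝ)⁻¹ *
          ((Finset.univ.filter (fun u => ∀ i ∈ I u, r i = false)).card : ℝ)) : ℝ) : ℂ) •
        syndromeProj S r := by
  classical
  set f : Fin m → Matrix (Fin d) (Fin d) ℂ :=
    fun i => (2⁻¹ : ℂ) • (1 + (if r i then -S i else S i)) with hfdef
  set Q : Fin m → Matrix (Fin d) (Fin d) ℂ :=
    fun i => (2⁻¹ : ℂ) • (1 + S i) with hQdef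
  have hP : syndromeProj S r = ((List.finRange m).map f).prod := rfl
  -- two algebraic facts about involutions
  have habs : ∀ (A : Matrix (Fin d) (Fin d) ℂ), A * A = 1 →
      ((2⁻¹:ℂ) • (1 + A)) * ((2⁻¹:ℂ) • (1 + (-A))) = 0 := by
    intro A hA
    have e : ((1 : Matrix (Fin d) (Fin d) ℂ) + A) * (1 + (-A)) = 1 - A * A := by
      noncomm_ring
    rw [smul_mul_assoc, mul_smul_comm, e, hA, sub_self, smul_zero, smul_zero]
  have hidem : ∀ (A : Matrix (Fin d) (Fin d) ℂ), A * A = 1 →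
      ((2⁻¹:ℂ) • (1 + A)) * ((2⁻¹:ℂ) • (1 + A)) = (2⁻¹:ℂ) • (1 + A) := by
    intro A hA
    have e : ((1 : Matrix (Fin d) (Fin d) ℂ) + A) * (1 + A) = 1 + A + A + A * A := by
      noncomm_ring
    rw [smul_mul_assoc, mul_smul_comm, e, hA]
    module
  -- Q i commutes with f j
  have hQf : ∀ i j, Q i * f j = f j * Q i := by
    intro i j
    have h1 : Commute (S i) (if r j then -S j else S j) := by
      rcases Bool.eq_false_or_eq_true (r j) with h | h
      · simpa [h] using Commute.neg_right (hcomm i j : Commute (S i) (S j))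
      · rw [h, if_neg (by decide)]; exact hcomm i j
    have h2 : Commute ((1 : Matrix (Fin d) (Fin d) ℂ) + S i)
        (1 + (if r j then -S j else S j)) :=
      (Commute.one_left _).add_left ((Commute.one_right (S i)).add_right h1)
    exact ((h2.smul_left ((2:ℂ)⁻¹)).smul_right ((2:ℂ)⁻¹)).eq
  -- Q i * f i = if r i then 0 else f i
  have hQQ : ∀ i, Q i * f i = if r i then 0 else f i := by
    intro i
    simp only [hQdef, hfdef]
    rcases Bool.eq_false_or_eq_true (r i) with h | h <;> simp only [h, if_true, if_false,
      Bool.false_eq_true, Bool.true_eq_false, eq_self_iff_true]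
    · exact habs (S i) (hinv i)
    · exact hidem (S i) (hinv i)
  -- key: Q i absorbs into any product of f's containing i
  have key : ∀ (L : List (Fin m)), ∀ i ∈ L,
      Q i * (L.map f).prod = if r i then 0 else (L.map f).prod := by
    intro L
    induction L with
    | nil => simp
    | cons j l ih =>
      intro i hi
      rw [List.map_cons, List.prod_cons, ← mul_assoc]
      rcases List.mem_cons.mp hi with h | h
      · subst h
        rw [hQQ i]
        rcases Bool.eq_false_or_eq_true (r i) with h | h <;> simp [h]
      · rw [hQf i j, mul_assoc, ih i h]
        rcases Bool.eq_false_or_eq_true (r i) with h | h <;> simp [h]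
  -- block product acts on P_r
  have block : ∀ (L : List (Fin m)), (L.map Q).prod * syndromeProj S r =
      if (∀ i ∈ L, r i = false) then syndromeProj S r else 0 := by
    intro L
    induction L with
    | nil => simp
    | cons j l ih =>
      rw [List.map_cons, List.prod_cons, mul_assoc, ih]
      by_cases hl : ∀ i ∈ l, r i = false
      · rw [if_pos hl, hP, key (List.finRange m) j (List.mem_finRange j)]
        rcases Bool.eq_false_or_eq_true (r j) with h | h
        · rw [if_pos h, if_neg fun hall =>
            absurd (hall j List.mem_cons_self) (by simp [h])]
        · rw [if_neg (by simp [h]), if_pos fun i hi => by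
            rcases List.mem_cons.mp hi with h' | h'
            · exact h' ▸ h
            · exact hl i h']
      · rw [if_neg hl, mul_zero,
          if_neg fun hall => hl fun i hi => hall i (List.mem_cons_of_mem _ hi)]
  -- put it together
  rw [smul_mul_assoc, Finset.sum_mul]
  have hterm : ∀ u : Fin χ,
      ((I u).toList.map Q).prod * syndromeProj S r =
      if (∀ i ∈ I u, r i = false) then syndromeProj S r else 0 := by
    intro u
    rw [block ((I u).toList)]
    congr 1
    simp [Finset.mem_toList]
  calc (χ : ℂ)⁻¹ • ∑ u, ((I u).toList.map Q).prod * syndromeProj S r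
      = (χ : ℂ)⁻¹ • ∑ u, (if (∀ i ∈ I u, r i = false) then syndromeProj S r else 0) := by
        rw [Finset.sum_congr rfl fun u _ => hterm u]
    _ = (χ : ℂ)⁻¹ • (((Finset.univ.filter (fun u => ∀ i ∈ I u, r i = false)).card : ℂ)
          • syndromeProj S r) := by
        rw [Finset.sum_ite, Finset.sum_const, Finset.sum_const_zero, add_zero,
          Nat.cast_smul_eq_nsmul]
    _ = _ := by
        rw [smul_smul]
        congr 1
        push_cast
        ring
end

section
/- Let S₁, …, S_m be pairwise commuting Hermitian involutions on a finite-dimensional complex Hilbert space with P_r := ∏_{i=1}^m (I + (−1)^{r_i} S_i)/2 ≠ 0 for every r ∈ {0,1}^m, and let {I_u}_{u=1}^{χ} be a partition of {1, …, m} into χ ≥ 1 nonempty blocks. Then the spectrum of Ω_chr := (1/χ) Σ_{u=1}^{χ} ∏_{i ∈ I_u} (I + S_i)/2 is exactly { j/χ : j = 0, 1, …, χ }; the eigenvalue 1 is attained exactly on the range of P₀, the second largest eigenvalue is 1 − 1/χ, and the smallest eigenvalue is 0, so Δ_min(Ω_chr) = 1/χ and Δ_max(Ω_chr) = 1. -/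
open Matrix


section Aux
variable {B : Type*} [CommRing B] [Algebra ℂ B]

/-- Auxiliary factor `(1 ± T)/2`. -/
noncomputable def ggFac (T : B) (b : Bool) : B := (2⁻¹ : ℂ) • (1 + if b then -T else T)

lemma ggFac_mul (T : B) (hT : T * T = 1) (b c : Bool) :
    ggFac T b * ggFac T c = if b = c then ggFac T b else 0 := by
  have hc : algebraMap ℂ B 2⁻¹ * 2 = 1 := by
    rw [← map_ofNat (algebraMap ℂ B) 2, ← _root_.map_mul]
    norm_num
  set e := algebraMap ℂ B 2⁻¹ with he
  cases b <;> cases c <;>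
    simp only [ggFac, if_true, if_false, Bool.true_eq_false, Bool.false_eq_true,
      Algebra.smul_def, ← he, if_pos rfl]
  · linear_combination (e * e) * hT + (e * (1 + T)) * hc
  · linear_combination (-(e * e)) * hT
  · linear_combination (-(e * e)) * hT
  · linear_combination (e * e) * hT + (e * (1 - T)) * hc

lemma ggFac_sum (T : B) : ggFac T false + ggFac T true = 1 := by
  have hc : algebraMap ℂ B 2⁻¹ * 2 = 1 := by
    rw [← map_ofNat (algebraMap ℂ B) 2, ← _root_.map_mul]
    norm_num
  simp only [ggFac, Bool.false_eq_true, if_true, if_false, Algebra.smul_def]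
  linear_combination hc


variable {m : ℕ}

/-- `P_r` in an abstract commutative algebra. -/
noncomputable def ggP (T : Fin m → B) (r : Fin m → Bool) : B := ∏ i, ggFac (T i) (r i)

lemma ggP_mul (T : Fin m → B) (hT : ∀ i, T i * T i = 1) (r t : Fin m → Bool) :
    ggP T r * ggP T t = if r = t then ggP T r else 0 := by
  classical
  by_cases hrt : r = t
  · subst hrt
    rw [if_pos rfl, ggP, ← Finset.prod_mul_distrib]
    exact Finset.prod_congr rfl fun i _ => by rw [ggFac_mul _ (hT i), if_pos rfl]
  · rw [if_neg hrt, ggP, ggP, ← Finset.prod_mul_distrib]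
    obtain ⟨i0, hi0⟩ : ∃ i, r i ≠ t i := Function.ne_iff.mp hrt
    exact Finset.prod_eq_zero (Finset.mem_univ i0) (by rw [ggFac_mul _ (hT i0), if_neg hi0])

lemma ggP_sum (T : Fin m → B) : (∑ r : Fin m → Bool, ggP T r) = 1 := by
  classical
  have h1 : ∀ i : Fin m, ∑ b : Bool, ggFac (T i) b = 1 := by
    intro i
    rw [Fintype.sum_bool, add_comm, ggFac_sum]
  calc (∑ r : Fin m → Bool, ggP T r)
      = ∑ r ∈ Fintype.piFinset (fun _ : Fin m => (Finset.univ : Finset Bool)),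
          ∏ i, ggFac (T i) (r i) := by rw [Fintype.piFinset_univ]; rfl
    _ = ∏ i, ∑ b : Bool, ggFac (T i) b := (Finset.prod_univ_sum _ _).symm
    _ = 1 := Finset.prod_eq_one fun i _ => h1 i

lemma ggPi_mul_ggP (T : Fin m → B) (hT : ∀ i, T i * T i = 1) (s : Finset (Fin m))
    (r : Fin m → Bool) :
    (∏ i ∈ s, ggFac (T i) false) * ggP T r =
      if (∀ i ∈ s, r i = false) then ggP T r else 0 := by
  classical
  have hsplit : ggP T r = (∏ i ∈ s, ggFac (T i) (r i)) * ∏ i ∈ sᶜ, ggFac (T i) (r i) :=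
    (Finset.prod_mul_prod_compl _ _).symm
  by_cases h : ∀ i ∈ s, r i = false
  · rw [if_pos h, hsplit, ← mul_assoc, ← Finset.prod_mul_distrib]
    congr 1
    refine Finset.prod_congr rfl fun i hi => ?_
    rw [ggFac_mul _ (hT i), if_pos (h i hi).symm, h i hi]
  · rw [if_neg h, hsplit, ← mul_assoc, ← Finset.prod_mul_distrib]
    push_neg at h
    obtain ⟨i0, hi0, hri0⟩ := h
    rw [Finset.prod_eq_zero hi0 (by rw [ggFac_mul _ (hT i0), if_neg (Ne.symm hri0)]), zero_mul]

end Aux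

/-- for independent generators (all `P_r ≠ 0`) and a partition
`{I_u}_{u=1}^χ` of `{1,…,m}` into `χ ≥ 1` nonempty blocks, the spectrum of
`Ω_chr = (1/χ) ∑_u ∏_{i ∈ I_u} (I + S i)/2` is exactly `{j/χ : j = 0, …, χ}` and the
eigenvalue 1 is attained exactly on the range (= fixed-point set) of `P₀`; in particular
the second largest eigenvalue is `1 - 1/χ` and the smallest is `0`, so `Δ_min = 1/χ` and
`Δ_max = 1`. -/
theorem omegaChr_spectrum {d m χ : ℕ} (hχ : 0 < χ)
    (S : Fin m → Matrix (Fin d) (Fin d) ℂ)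
    (hherm : ∀ i, (S i).IsHermitian)
    (hinv : ∀ i, S i * S i = 1)
    (hcomm : ∀ i j, S i * S j = S j * S i)
    (hne0 : ∀ r : Fin m → Bool, syndromeProj S r ≠ 0)
    (I : Fin χ → Finset (Fin m))
    (hne : ∀ u, (I u).Nonempty)
    (hdisj : ∀ u v, u ≠ v → Disjoint (I u) (I v))
    (hcover : ∀ i, ∃ u, i ∈ I u) :
    spectrum ℂ ((χ : ℂ)⁻¹ • ∑ u, ((I u).toList.map (fun i => (2⁻¹ : ℂ) • (1 + S i))).prod) =
        {z : ℂ | ∃ j : ℕ, j ≤ χ ∧ z = (j : ℂ) / (χ : ℂ)} ∧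
      (∀ v : Fin d → ℂ,
        ((χ : ℂ)⁻¹ • ∑ u, ((I u).toList.map (fun i => (2⁻¹ : ℂ) • (1 + S i))).prod) *ᵥ v = v ↔
          syndromeProj S (fun _ => false) *ᵥ v = v) := by
  classical
  have hχ0 : (χ : ℂ) ≠ 0 := Nat.cast_ne_zero.mpr hχ.ne'
  set A : Subalgebra ℂ (Matrix (Fin d) (Fin d) ℂ) := Algebra.adjoin ℂ (Set.range S) with hA
  have hmemA : ∀ i, S i ∈ A := fun i => Algebra.subset_adjoin ⟨i, rfl⟩
  letI : CommRing A := Algebra.adjoinCommRingOfComm ℂ (by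
    rintro a ⟨i, rfl⟩ b ⟨j, rfl⟩; exact hcomm i j)
  set T : Fin m → A := fun i => ⟨S i, hmemA i⟩ with hTdef
  have hT : ∀ i, T i * T i = 1 := fun i => Subtype.ext (hinv i)
  -- bridge lemmas
  have hval : ∀ i b, A.val (ggFac (T i) b) = (2⁻¹ : ℂ) • (1 + if b then -S i else S i) := by
    intro i b; cases b <;> rfl
  have hsynd : ∀ r, syndromeProj S r = A.val (ggP T r) := by
    intro r
    rw [ggP, Fin.prod_univ_def, map_list_prod, List.map_map]
    refine congrArg List.prod ?_
    exact (List.map_congr_left fun i _ => (hval i (r i))).symm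
  set Pi_ : Fin χ → A := fun u => ∏ i ∈ I u, ggFac (T i) false with hPi_
  have hPival : ∀ u, ((I u).toList.map (fun i => (2⁻¹ : ℂ) • (1 + S i))).prod = A.val (Pi_ u) := by
    intro u
    have h0 : Pi_ u = ∏ i ∈ I u, ggFac (T i) false := rfl
    rw [h0, ← Finset.prod_map_toList, map_list_prod, List.map_map]
    refine congrArg List.prod ?_
    refine (List.map_congr_left fun i _ => ?_).symm
    rw [Function.comp_apply, hval]
    simp
  set ΩA : A := ∑ u, Pi_ u with hΩA
  set Ωm : Matrix (Fin d) (Fin d) ℂ := (χ : ℂ)⁻¹ • A.val ΩA with hΩm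
  have hgoal : ((χ : ℂ)⁻¹ • ∑ u, ((I u).toList.map (fun i => (2⁻¹ : ℂ) • (1 + S i))).prod) = Ωm := by
    rw [hΩm, hΩA, map_sum]
    congr 1
    exact Finset.sum_congr rfl fun u _ => hPival u
  rw [hgoal]
  -- counting function
  set N : (Fin m → Bool) → ℕ :=
    fun r => (Finset.univ.filter fun u => ∀ i ∈ I u, r i = false).card with hNdef
  have hΩAP : ∀ r, ΩA * ggP T r = N r • ggP T r := by
    intro r
    rw [hΩA, Finset.sum_mul]
    simp only [hPi_, ggPi_mul_ggP T hT]
    rw [Finset.sum_ite, Finset.sum_const, Finset.sum_const_zero, add_zero]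
  -- matrix-level facts
  have hΩP : ∀ r, Ωm * A.val (ggP T r) = ((N r : ℂ) / χ) • A.val (ggP T r) := by
    intro r
    rw [hΩm, smul_mul_assoc, ← _root_.map_mul, hΩAP, map_nsmul,
      ← Nat.cast_smul_eq_nsmul ℂ, smul_smul, div_eq_inv_mul]
  have hPΩ : ∀ r, A.val (ggP T r) * Ωm = ((N r : ℂ) / χ) • A.val (ggP T r) := by
    intro r
    rw [hΩm, mul_smul_comm, ← _root_.map_mul, mul_comm, hΩAP, map_nsmul,
      ← Nat.cast_smul_eq_nsmul ℂ, smul_smul, div_eq_inv_mul]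
  have hPsum : (∑ r : Fin m → Bool, A.val (ggP T r)) = 1 := by
    rw [← _root_.map_sum, ggP_sum, _root_.map_one]
  -- counting facts
  have hNle : ∀ r, N r ≤ χ := by
    intro r
    have := Finset.card_filter_le (Finset.univ : Finset (Fin χ)) fun u => ∀ i ∈ I u, r i = false
    simpa using this
  have hN0 : N (fun _ => false) = χ := by
    rw [hNdef]
    simp
  have hNlt : ∀ r, r ≠ (fun _ => false) → N r < χ := by
    intro r hr
    obtain ⟨i, hi0⟩ := Function.ne_iff.mp hr
    have hi : r i = true := by simpa using hi0
    obtain ⟨u0, hu0⟩ := hcover i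
    have hss : (Finset.univ.filter fun u => ∀ i ∈ I u, r i = false) ⊂ Finset.univ :=
      Finset.filter_ssubset.mpr ⟨u0, Finset.mem_univ _, fun h => by
        rw [h i hu0] at hi; exact Bool.false_ne_true hi⟩
    have := Finset.card_lt_card hss
    simpa using this
  have hNsurj : ∀ j, j ≤ χ → ∃ r, N r = j := by
    intro j hj
    refine ⟨fun i => decide (∃ u : Fin χ, j ≤ (u : ℕ) ∧ i ∈ I u), ?_⟩
    have hiff : ∀ u : Fin χ,
        (∀ i ∈ I u, (decide (∃ u' : Fin χ, j ≤ (u' : ℕ) ∧ i ∈ I u')) = false) ↔ (u : ℕ) < j := by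
      intro u
      constructor
      · intro h
        by_contra hle
        push_neg at hle
        obtain ⟨i, hi⟩ := hne u
        have := h i hi
        rw [decide_eq_false_iff_not] at this
        exact this ⟨u, hle, hi⟩
      · intro hu i hi
        rw [decide_eq_false_iff_not]
        rintro ⟨u', hju', hiu'⟩
        have heq : u' = u := by
          by_contra hne'
          exact (Finset.disjoint_left.mp (hdisj u' u hne') hiu') hi
        subst heq
        omega
    rw [hNdef]
    simp only []
    rw [Finset.filter_congr fun u _ => by rw [hiff u]]
    have hcard : (Finset.univ.filter fun u : Fin χ => (u : ℕ) < j).card = (Finset.range j).card := by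
      refine Finset.card_bij' (fun u _ => (u : ℕ))
        (fun n hn => ⟨n, lt_of_lt_of_le (Finset.mem_range.mp hn) hj⟩) ?_ ?_ ?_ ?_
      · intro a ha
        exact Finset.mem_range.mpr (Finset.mem_filter.mp ha).2
      · intro n hn
        exact Finset.mem_filter.mpr ⟨Finset.mem_univ _, Finset.mem_range.mp hn⟩
      · intro a ha; rfl
      · intro n hn; rfl
    rw [hcard, Finset.card_range]
  -- helper : sums pull out of mulVec
  have hsum_mulVec : ∀ {ι : Type} (s : Finset ι) (f : ι → Matrix (Fin d) (Fin d) ℂ)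
      (v : Fin d → ℂ), (∑ i ∈ s, f i) *ᵥ v = ∑ i ∈ s, f i *ᵥ v := by
    intro ι s f v
    induction s using Finset.induction_on with
    | empty => simp [Matrix.zero_mulVec]
    | insert _ _ h ih => rw [Finset.sum_insert h, Finset.sum_insert h, Matrix.add_mulVec, ih]
  constructor
  · -- spectrum
    ext z
    simp only [Set.mem_setOf_eq]
    constructor
    · intro hz
      by_contra hcon
      push_neg at hcon
      refine spectrum.mem_iff.mp hz ?_
      have hz' : ∀ r : Fin m → Bool, z - (N r : ℂ) / χ ≠ 0 :=
        fun r => sub_ne_zero.mpr (hcon (N r) (hNle r))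
      set M : Matrix (Fin d) (Fin d) ℂ := algebraMap ℂ _ z - Ωm with hM
      set Bm : Matrix (Fin d) (Fin d) ℂ :=
        ∑ r : Fin m → Bool, (z - (N r : ℂ) / χ)⁻¹ • A.val (ggP T r) with hBm
      have hMP : ∀ r, M * A.val (ggP T r) = (z - (N r : ℂ) / χ) • A.val (ggP T r) := by
        intro r
        rw [hM, sub_mul, Algebra.algebraMap_eq_smul_one, smul_mul_assoc, one_mul, hΩP,
          sub_smul]
      have hPM : ∀ r, A.val (ggP T r) * M = (z - (N r : ℂ) / χ) • A.val (ggP T r) := by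
        intro r
        rw [hM, mul_sub, Algebra.algebraMap_eq_smul_one, mul_smul_comm, mul_one, hPΩ,
          sub_smul]
      have h1 : M * Bm = 1 := by
        rw [hBm, Finset.mul_sum]
        calc ∑ r : Fin m → Bool, M * ((z - (N r : ℂ) / χ)⁻¹ • A.val (ggP T r))
            = ∑ r : Fin m → Bool, A.val (ggP T r) := by
              refine Finset.sum_congr rfl fun r _ => ?_
              rw [mul_smul_comm, hMP, smul_smul, inv_mul_cancel₀ (hz' r), one_smul]
          _ = 1 := hPsum
      have h2 : Bm * M = 1 := by
        rw [hBm, Finset.sum_mul]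
        calc ∑ r : Fin m → Bool, ((z - (N r : ℂ) / χ)⁻¹ • A.val (ggP T r)) * M
            = ∑ r : Fin m → Bool, A.val (ggP T r) := by
              refine Finset.sum_congr rfl fun r _ => ?_
              rw [smul_mul_assoc, hPM, smul_smul, inv_mul_cancel₀ (hz' r), one_smul]
          _ = 1 := hPsum
      exact (⟨M, Bm, h1, h2⟩ : (Matrix (Fin d) (Fin d) ℂ)ˣ).isUnit
    · rintro ⟨j, hj, rfl⟩
      obtain ⟨r, hr⟩ := hNsurj j hj
      have hP0 : A.val (ggP T r) ≠ 0 := by rw [← hsynd]; exact hne0 r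
      have hentry : ∃ a b, A.val (ggP T r) a b ≠ 0 := by
        by_contra h
        push_neg at h
        exact hP0 (Matrix.ext fun a b => h a b)
      obtain ⟨a, b, hab⟩ := hentry
      set v : Fin d → ℂ := A.val (ggP T r) *ᵥ Pi.single b 1 with hv
      have hv0 : v ≠ 0 := by
        intro h
        apply hab
        have := congrFun h a
        simpa [hv, Matrix.mulVec_single] using this
      rw [spectrum.mem_iff]
      intro hu
      apply hv0
      have hΩv : Ωm *ᵥ v = ((j : ℂ) / χ) • v := by
        rw [hv, Matrix.mulVec_mulVec, hΩP, hr, Matrix.smul_mulVec]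
      have hMv : (algebraMap ℂ _ ((j : ℂ) / χ) - Ωm) *ᵥ v = 0 := by
        rw [Matrix.sub_mulVec, hΩv, Algebra.algebraMap_eq_smul_one,
          Matrix.smul_mulVec, Matrix.one_mulVec, sub_self]
      obtain ⟨u, huu⟩ := hu
      calc v = 1 *ᵥ v := (Matrix.one_mulVec v).symm
        _ = ((↑u⁻¹ : Matrix (Fin d) (Fin d) ℂ) * ↑u) *ᵥ v := by rw [u.inv_mul]
        _ = (↑u⁻¹ : Matrix (Fin d) (Fin d) ℂ) *ᵥ (↑u *ᵥ v) := (Matrix.mulVec_mulVec v _ _).symm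
        _ = 0 := by rw [huu, hMv, Matrix.mulVec_zero]
  · -- fixed points
    intro v
    rw [hsynd]
    constructor
    · intro hv
      have hzero : ∀ r : Fin m → Bool, r ≠ (fun _ => false) → A.val (ggP T r) *ᵥ v = 0 := by
        intro r hr
        have h1 : A.val (ggP T r) *ᵥ v = ((N r : ℂ) / χ) • (A.val (ggP T r) *ᵥ v) := by
          conv_lhs => rw [← hv, Matrix.mulVec_mulVec, hPΩ, Matrix.smul_mulVec]
        have hc1 : ((N r : ℂ) / χ) ≠ 1 := by
          intro heq
          rw [div_eq_iff hχ0, one_mul, Nat.cast_inj] at heq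
          exact (hNlt r hr).ne heq
        have h2 : (1 - (N r : ℂ) / χ) • (A.val (ggP T r) *ᵥ v) = 0 := by
          rw [sub_smul, one_smul, ← h1, sub_self]
        rcases smul_eq_zero.mp h2 with h | h
        · exact absurd (by linear_combination -h) hc1
        · exact h
      calc A.val (ggP T (fun _ => false)) *ᵥ v
          = ∑ r : Fin m → Bool, A.val (ggP T r) *ᵥ v := by
            refine (Finset.sum_eq_single _ (fun r _ hr => hzero r hr) ?_).symm
            intro h
            exact absurd (Finset.mem_univ _) h
        _ = (∑ r : Fin m → Bool, A.val (ggP T r)) *ᵥ v := (hsum_mulVec _ _ _).symm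
        _ = v := by rw [hPsum, Matrix.one_mulVec]
    · intro hv
      conv_lhs => rw [← hv, Matrix.mulVec_mulVec, hΩP, hN0]
      rw [div_self hχ0, one_smul, hv]
end

section
/- Let n ≥ k ≥ 0, set block dimensions 2^k and 2^{n−k}, and let U be a unitary on ℂ^{2^n} = ℂ^{2^k} ⊗ ℂ^{2^{n−k}}. Let e be a fixed unit vector in ℂ^{2^{n−k}} and define the code-space projector P := U† ( I_{2^k} ⊗ |e⟩⟨e| ) U. Let Q₁, …, Q_{4^k} be Hermitian 2^k × 2^k matrices with Tr(Q_i Q_j) = 2^k·δ_{ij}, and define the logical operators B_j := U† ( Q_j ⊗ I_{2^{n−k}} ) U. Let |ψ⟩ be a unit vector with P|ψ⟩ = |ψ⟩, and let ρ be a density matrix on ℂ^{2^n} with Tr(P ρ) ≥ 1 − ε₁ for some ε₁ ∈ [0,1]. Then | ⟨ψ| ρ |ψ⟩ − (1/2^k) Σ_{j=1}^{4^k} Tr(B_j |ψ⟩⟨ψ|) · Tr(B_j ρ) | ≤ ε₁. -/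
open Matrix
open scoped Kronecker ComplexOrder

-- trace of PSD nonneg
lemma aux_trace_nonneg {m : Type*} [Fintype m] [DecidableEq m] {A : Matrix m m ℂ}
    (hA : A.PosSemidef) : 0 ≤ A.trace := by
  have h : ∀ i, 0 ≤ A i i := fun i => by
    exact hA.diag_nonneg
  exact Finset.sum_nonneg fun i _ => h i

-- real trace of product of hermitians
lemma aux_trace_real {m : Type*} [Fintype m] {H K : Matrix m m ℂ}
    (hH : H.IsHermitian) (hK : K.IsHermitian) : ((H * K).trace).im = 0 := by
  have : star ((H * K).trace) = (H * K).trace := by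
    rw [← trace_conjTranspose, conjTranspose_mul, hH.eq, hK.eq, trace_mul_comm]
  rw [Complex.star_def] at this
  have h2 := congrArg Complex.im this
  simp only [Complex.conj_im] at h2
  linarith

-- conjTranspose of kronecker
lemma aux_kron_conjT {m n : Type*} (X : Matrix m m ℂ) (Y : Matrix n n ℂ) :
    (X ⊗ₖ Y)ᴴ = Xᴴ ⊗ₖ Yᴴ := by
  ext ⟨p, q⟩ ⟨r, s⟩
  simp [conjTranspose_apply, kroneckerMap_apply, mul_comm]

-- completeness of orthogonal Hermitian basis
lemma aux_complete {N : ℕ} (hN : (N : ℂ) ≠ 0) {ι : Type*} [Fintype ι] [DecidableEq ι]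
    (hcard : Fintype.card ι = N * N)
    (Q : ι → Matrix (Fin N) (Fin N) ℂ)
    (horth : ∀ i j, (Q i * Q j).trace = if i = j then (N : ℂ) else 0)
    (σ τ : Matrix (Fin N) (Fin N) ℂ) :
    ∑ j, (Q j * σ).trace * (Q j * τ).trace = (N : ℂ) * (σ * τ).trace := by
  have hN0 : N ≠ 0 := by exact_mod_cast fun h => hN (by rw [h]; simp)
  have li : LinearIndependent ℂ Q := by
    rw [Fintype.linearIndependent_iff]
    intro g hg i
    have h := congrArg (fun M => (Q i * M).trace) hg
    simp only [Matrix.mul_sum, Matrix.mul_smul, trace_sum, trace_smul, horth, smul_eq_mul,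
      mul_ite, mul_one, mul_zero, Finset.sum_ite_eq, Finset.mem_univ, if_true,
      Matrix.mul_zero, trace_zero] at h
    exact (mul_eq_zero.mp h).resolve_right hN
  have hne : Nonempty ι := Fintype.card_pos_iff.mp (by rw [hcard]; positivity)
  have hfr : Fintype.card ι = Module.finrank ℂ (Matrix (Fin N) (Fin N) ℂ) := by
    simp [Module.finrank_matrix, hcard]
  let b := basisOfLinearIndependentOfCardEqFinrank li hfr
  have hb : ⇑b = Q := coe_basisOfLinearIndependentOfCardEqFinrank li hfr
  -- key : ∑ j, (Q j * τ).trace • Q j = N • τ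
  have key : ∑ j, (Q j * τ).trace • Q j = (N : ℂ) • τ := by
    obtain ⟨c, hc⟩ : ∃ c : ι → ℂ, τ = ∑ i, c i • Q i :=
      ⟨b.repr τ, by conv_lhs => rw [← b.sum_repr τ, hb]⟩
    rw [hc]
    simp only [Matrix.mul_sum, Matrix.mul_smul, trace_sum, trace_smul, horth, smul_eq_mul,
      mul_ite, mul_one, mul_zero, Finset.sum_ite_eq, Finset.mem_univ, if_true]
    rw [Finset.smul_sum]
    exact Finset.sum_congr rfl fun j _ => by rw [smul_smul, mul_comm]
  have h2 := congrArg (fun M => (σ * M).trace) key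
  simp only [Matrix.mul_sum, Matrix.mul_smul, trace_sum, trace_smul, smul_eq_mul] at h2
  rw [← h2]
  exact Finset.sum_congr rfl fun j _ => by rw [trace_mul_comm σ (Q j), mul_comm]

lemma aux_proj_trace_nonneg {m : Type*} [Fintype m] [DecidableEq m] {G R : Matrix m m ℂ}
    (hG : Gᴴ = G) (hG2 : G * G = G) (hR : R.PosSemidef) : 0 ≤ (G * R).trace := by
  have key : (G * R * Gᴴ).trace = (G * R).trace := by
    rw [hG, trace_mul_comm (G * R) G, ← mul_assoc, hG2]
  rw [← key]
  exact aux_trace_nonneg (hR.mul_mul_conjTranspose_same G)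

lemma aux_ptrace {N M : ℕ} (C : Matrix (Fin N) (Fin N) ℂ)
    (R : Matrix (Fin N × Fin M) (Fin N × Fin M) ℂ) :
    ((C ⊗ₖ (1 : Matrix (Fin M) (Fin M) ℂ)) * R).trace
      = (C * (Matrix.of fun p q => ∑ m, R (p, m) (q, m))).trace := by
  simp only [Matrix.trace, Matrix.diag, Matrix.mul_apply, Matrix.of_apply,
    kroneckerMap_apply, Fintype.sum_prod_type, Matrix.one_apply, mul_ite, mul_one,
    mul_zero, ite_mul, zero_mul, Finset.sum_ite_eq, Finset.sum_ite_eq',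
    Finset.mem_univ, if_true, Finset.mul_sum]
  exact Finset.sum_congr rfl fun p _ => Finset.sum_comm

lemma aux_vmv_herm {m : Type*} (v : m → ℂ) :
    (vecMulVec v (star v))ᴴ = vecMulVec v (star v) := by
  ext i j
  simp [conjTranspose_apply, vecMulVec_apply, mul_comm]

lemma aux_vmv_idem {m : Type*} [Fintype m] (v : m → ℂ) (hv : star v ⬝ᵥ v = 1) :
    vecMulVec v (star v) * vecMulVec v (star v) = vecMulVec v (star v) := by
  ext i j
  simp only [mul_apply, vecMulVec_apply, Pi.star_apply]
  have : ∀ r, v i * star (v r) * (v r * star (v j))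
      = (star (v r) * v r) * (v i * star (v j)) := fun r => by ring
  simp only [this, ← Finset.sum_mul]
  have h : ∑ r, star (v r) * v r = 1 := by simpa [dotProduct] using hv
  rw [h, one_mul]

lemma aux_quad {m : Type*} [Fintype m] (v : m → ℂ) (R : Matrix m m ℂ) :
    star v ⬝ᵥ (R *ᵥ v) = (vecMulVec v (star v) * R).trace := by
  simp only [dotProduct, mulVec, Matrix.trace, Matrix.diag, mul_apply, vecMulVec_apply,
    Pi.star_apply, Finset.mul_sum]
  rw [Finset.sum_comm]
  exact Finset.sum_congr rfl fun i _ => Finset.sum_congr rfl fun j _ => by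
    simp [dotProduct]; ring

lemma aux_vecMulVec_conj {m : Type*} [Fintype m] (V : Matrix m m ℂ) (v : m → ℂ) :
    vecMulVec (V *ᵥ v) (star (V *ᵥ v)) = V * vecMulVec v (star v) * Vᴴ := by
  ext i j
  simp only [vecMulVec_apply, Pi.star_apply, mulVec, dotProduct, mul_apply,
    conjTranspose_apply, star_sum, star_mul', Finset.mul_sum, Finset.sum_mul]
  exact Finset.sum_congr rfl fun r _ => Finset.sum_congr rfl fun s _ => by ring

lemma aux_sub_kron {l m : Type*} (X Y : Matrix l l ℂ) (B : Matrix m m ℂ) :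
    (X - Y) ⊗ₖ B = X ⊗ₖ B - Y ⊗ₖ B := by
  ext ⟨p, q⟩ ⟨r, s⟩
  simp [kroneckerMap_apply, sub_mul]

lemma aux_kron_sub {l m : Type*} (A : Matrix l l ℂ) (X Y : Matrix m m ℂ) :
    A ⊗ₖ (X - Y) = A ⊗ₖ X - A ⊗ₖ Y := by
  ext ⟨p, q⟩ ⟨r, s⟩
  simp [kroneckerMap_apply, mul_sub]

/-- let `U` be a decoding unitary on `ℂ^{2^k} ⊗ ℂ^{2^{n-k}}`, `P` the
code-space projector `U† (I ⊗ |e⟩⟨e|) U`, `B j = U† (Q j ⊗ I) U` the logical operators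
built from a Hermitian orthogonal basis `Q` with `Tr(Q i Q j) = 2^k δ_{ij}`, `ψ` a unit
code vector (`P ψ = ψ`) and `ρ` a density matrix with `Tr(P ρ) ≥ 1 - ε₁`. Then the
logical fidelity `(1/2^k) ∑ j Tr(B j |ψ⟩⟨ψ|)·Tr(B j ρ)` approximates the true fidelity
`⟨ψ|ρ|ψ⟩` up to `ε₁`. -/
theorem logical_fidelity_approximates_fidelity (n k : ℕ) (hkn : k ≤ n)
    (U : Matrix (Fin (2 ^ k) × Fin (2 ^ (n - k))) (Fin (2 ^ k) × Fin (2 ^ (n - k))) ℂ)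
    (hU1 : Uᴴ * U = 1) (hU2 : U * Uᴴ = 1)
    (e : Fin (2 ^ (n - k)) → ℂ) (he : star e ⬝ᵥ e = 1)
    (P : Matrix (Fin (2 ^ k) × Fin (2 ^ (n - k))) (Fin (2 ^ k) × Fin (2 ^ (n - k))) ℂ)
    (hP : P = Uᴴ * ((1 : Matrix (Fin (2 ^ k)) (Fin (2 ^ k)) ℂ) ⊗ₖ
        Matrix.vecMulVec e (star e)) * U)
    (Q : Fin (4 ^ k) → Matrix (Fin (2 ^ k)) (Fin (2 ^ k)) ℂ)
    (hQherm : ∀ j, (Q j).IsHermitian)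
    (hQorth : ∀ i j, (Q i * Q j).trace = if i = j then ((2 ^ k : ℕ) : ℂ) else 0)
    (B : Fin (4 ^ k) →
        Matrix (Fin (2 ^ k) × Fin (2 ^ (n - k))) (Fin (2 ^ k) × Fin (2 ^ (n - k))) ℂ)
    (hB : ∀ j, B j = Uᴴ *
        (Q j ⊗ₖ (1 : Matrix (Fin (2 ^ (n - k))) (Fin (2 ^ (n - k))) ℂ)) * U)
    (ψ : Fin (2 ^ k) × Fin (2 ^ (n - k)) → ℂ)
    (hψ : star ψ ⬝ᵥ ψ = 1) (hψP : P *ᵥ ψ = ψ)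
    (ρ : Matrix (Fin (2 ^ k) × Fin (2 ^ (n - k))) (Fin (2 ^ k) × Fin (2 ^ (n - k))) ℂ)
    (hρ : ρ.PosSemidef) (hρtr : ρ.trace = 1)
    (ε₁ : ℝ) (hε₁ : ε₁ ∈ Set.Icc (0 : ℝ) 1)
    (hfid : 1 - ε₁ ≤ (P * ρ).trace.re) :
    |(star ψ ⬝ᵥ (ρ *ᵥ ψ)).re -
        ((2 ^ k : ℕ) : ℝ)⁻¹ *
          ∑ j, ((B j * Matrix.vecMulVec ψ (star ψ)).trace.re) * ((B j * ρ).trace.re)| ≤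
      ε₁ := by
  set E := Matrix.vecMulVec e (star e) with hE
  set ψ' := U *ᵥ ψ with hψ'def
  set ρ' := U * ρ * Uᴴ with hρ'def
  set a : Fin (2 ^ k) → ℂ := fun p => ∑ l, star (e l) * ψ' (p, l) with hadef
  set A := Matrix.vecMulVec a (star a) with hA
  set τ : Matrix (Fin (2 ^ k)) (Fin (2 ^ k)) ℂ :=
    Matrix.of (fun p q => ∑ m, ρ' (p, m) (q, m)) with hτ
  set W := Matrix.vecMulVec ψ (star ψ) with hW
  -- basic conjugation facts
  have tconj : ∀ X : Matrix (Fin (2 ^ k) × Fin (2 ^ (n - k)))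
      (Fin (2 ^ k) × Fin (2 ^ (n - k))) ℂ, (Uᴴ * X * U).trace = X.trace := by
    intro X
    rw [trace_mul_comm, ← mul_assoc, hU2, one_mul]
  have tconj2 : ∀ X : Matrix (Fin (2 ^ k) × Fin (2 ^ (n - k)))
      (Fin (2 ^ k) × Fin (2 ^ (n - k))) ℂ,
      ((Uᴴ * X * U) * ρ).trace = (X * ρ').trace := by
    intro X
    conv_lhs => rw [mul_assoc (Uᴴ * X) U ρ, trace_mul_comm, ← mul_assoc, trace_mul_comm]
  have hmul : ∀ X Y : Matrix (Fin (2 ^ k) × Fin (2 ^ (n - k)))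
      (Fin (2 ^ k) × Fin (2 ^ (n - k))) ℂ,
      (Uᴴ * X * U) * (Uᴴ * Y * U) = Uᴴ * (X * Y) * U := by
    intro X Y
    simp only [mul_assoc]
    rw [← mul_assoc U Uᴴ, hU2, one_mul]
  -- ψ' is fixed by 1 ⊗ E
  have hψ'fix : ((1 : Matrix (Fin (2 ^ k)) (Fin (2 ^ k)) ℂ) ⊗ₖ E) *ᵥ ψ' = ψ' := by
    have hUP : U * (Uᴴ * ((1 : Matrix (Fin (2 ^ k)) (Fin (2 ^ k)) ℂ) ⊗ₖ E) * U)
        = ((1 : Matrix (Fin (2 ^ k)) (Fin (2 ^ k)) ℂ) ⊗ₖ E) * U := by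
      rw [← mul_assoc, ← mul_assoc, hU2, one_mul]
    calc ((1 : Matrix (Fin (2 ^ k)) (Fin (2 ^ k)) ℂ) ⊗ₖ E) *ᵥ ψ'
        = (((1 : Matrix (Fin (2 ^ k)) (Fin (2 ^ k)) ℂ) ⊗ₖ E) * U) *ᵥ ψ := by
          rw [hψ'def, mulVec_mulVec]
      _ = U *ᵥ (P *ᵥ ψ) := by rw [mulVec_mulVec, ← hUP, hP]
      _ = ψ' := by rw [hψP, hψ'def]
  -- entrywise decomposition ψ' (p, m) = a p * e m
  have ha : ∀ p m, ψ' (p, m) = a p * e m := by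
    intro p m
    have h := congrFun hψ'fix (p, m)
    simp only [mulVec, dotProduct, Fintype.sum_prod_type, kroneckerMap_apply, one_apply,
      hE, vecMulVec_apply, Pi.star_apply, ite_mul, one_mul, zero_mul] at h
    rw [Finset.sum_comm] at h
    simp only [Finset.sum_ite_eq, Finset.mem_univ, if_true] at h
    rw [← h, hadef, Finset.sum_mul]
    exact Finset.sum_congr rfl fun l _ => by ring
  -- ⟨a, a⟩ = 1
  have hee : ∑ m, star (e m) * e m = 1 := by simpa [dotProduct] using he
  have hψ'norm : ∑ x : Fin (2 ^ k) × Fin (2 ^ (n - k)), star (ψ' x) * ψ' x = 1 := by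
    have h1 : star ψ' ⬝ᵥ ψ' = 1 := by
      rw [hψ'def, star_mulVec, ← dotProduct_mulVec, mulVec_mulVec, hU1, one_mulVec, hψ]
    simpa [dotProduct] using h1
  have hsuma : star a ⬝ᵥ a = 1 := by
    have h2 : ∑ x : Fin (2 ^ k) × Fin (2 ^ (n - k)), star (ψ' x) * ψ' x
        = (∑ p, star (a p) * a p) * (∑ m, star (e m) * e m) := by
      rw [Fintype.sum_prod_type, Finset.sum_mul_sum]
      exact Finset.sum_congr rfl fun p _ => Finset.sum_congr rfl fun m _ => by
        rw [ha]; simp [star_mul']; ring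
    have := hψ'norm
    rw [h2, hee, mul_one] at this
    simpa [dotProduct] using this
  -- projector properties
  have hAherm : Aᴴ = A := aux_vmv_herm a
  have hAidem : A * A = A := aux_vmv_idem a hsuma
  have hEherm : Eᴴ = E := aux_vmv_herm e
  have hEidem : E * E = E := aux_vmv_idem e he
  have h1Eidem : ((1 : Matrix (Fin (2 ^ (n - k))) (Fin (2 ^ (n - k))) ℂ) - E)
      * ((1 : Matrix (Fin (2 ^ (n - k))) (Fin (2 ^ (n - k))) ℂ) - E)
      = (1 : Matrix (Fin (2 ^ (n - k))) (Fin (2 ^ (n - k))) ℂ) - E := by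
    simp only [mul_sub, sub_mul, one_mul, mul_one, hEidem]
    abel
  have h1Aidem : ((1 : Matrix (Fin (2 ^ k)) (Fin (2 ^ k)) ℂ) - A)
      * ((1 : Matrix (Fin (2 ^ k)) (Fin (2 ^ k)) ℂ) - A)
      = (1 : Matrix (Fin (2 ^ k)) (Fin (2 ^ k)) ℂ) - A := by
    simp only [mul_sub, sub_mul, one_mul, mul_one, hAidem]
    abel
  have hρ' : ρ'.PosSemidef := by
    rw [hρ'def]
    exact hρ.mul_mul_conjTranspose_same U
  -- G and G'
  set G := A ⊗ₖ ((1 : Matrix (Fin (2 ^ (n - k))) (Fin (2 ^ (n - k))) ℂ) - E) with hG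
  set G' := ((1 : Matrix (Fin (2 ^ k)) (Fin (2 ^ k)) ℂ) - A)
    ⊗ₖ ((1 : Matrix (Fin (2 ^ (n - k))) (Fin (2 ^ (n - k))) ℂ) - E) with hG'
  have hGherm : Gᴴ = G := by
    rw [hG, aux_kron_conjT, hAherm, conjTranspose_sub, conjTranspose_one, hEherm]
  have hGidem : G * G = G := by
    rw [hG, ← mul_kronecker_mul, hAidem, h1Eidem]
  have hG'herm : G'ᴴ = G' := by
    rw [hG', aux_kron_conjT, conjTranspose_sub, conjTranspose_one, hAherm,
      conjTranspose_sub, conjTranspose_one, hEherm]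
  have hG'idem : G' * G' = G' := by
    rw [hG', ← mul_kronecker_mul, h1Aidem, h1Eidem]
  have hc : 0 ≤ (G * ρ').trace := aux_proj_trace_nonneg hGherm hGidem hρ'
  have hc' : 0 ≤ (G' * ρ').trace := aux_proj_trace_nonneg hG'herm hG'idem hρ'
  -- trace identities
  have hWU : W = Uᴴ * (A ⊗ₖ E) * U := by
    have h1 : Matrix.vecMulVec ψ' (star ψ') = A ⊗ₖ E := by
      ext ⟨p, m⟩ ⟨q, l⟩
      simp only [vecMulVec_apply, Pi.star_apply, kroneckerMap_apply, hA, hE,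
        vecMulVec_apply, Pi.star_apply, ha, star_mul']
      ring
    have h2 : ψ = Uᴴ *ᵥ ψ' := by rw [hψ'def, mulVec_mulVec, hU1, one_mulVec]
    rw [hW, h2, aux_vecMulVec_conj, h1, conjTranspose_conjTranspose]
  have hBW : ∀ j, (B j * W).trace = (Q j * A).trace := by
    intro j
    have hEtr : E.trace = 1 := by
      simpa [Matrix.trace, Matrix.diag, hE, vecMulVec_apply, dotProduct, mul_comm] using he
    rw [hB j, hWU, hmul, tconj, ← mul_kronecker_mul, one_mul, trace_kronecker, hEtr, mul_one]
  have hBρ : ∀ j, (B j * ρ).trace = (Q j * τ).trace := by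
    intro j
    rw [hB j, tconj2, aux_ptrace]
  -- completeness
  have hNC : ((2 ^ k : ℕ) : ℂ) ≠ 0 := by
    simp [pow_ne_zero]
  have hcard : Fintype.card (Fin (4 ^ k)) = 2 ^ k * 2 ^ k := by
    rw [Fintype.card_fin, show (4 : ℕ) = 2 * 2 from rfl, mul_pow]
  have hsum : ∑ j, (Q j * A).trace * (Q j * τ).trace
      = ((2 ^ k : ℕ) : ℂ) * (A * τ).trace :=
    aux_complete hNC hcard Q hQorth A τ
  -- fidelity
  have hFid : star ψ ⬝ᵥ (ρ *ᵥ ψ) = ((A ⊗ₖ E) * ρ').trace := by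
    rw [aux_quad, ← hW, trace_mul_comm, ← tconj2, hWU, trace_mul_comm]
  have hAτ : (A * τ).trace = ((A ⊗ₖ (1 : Matrix (Fin (2 ^ (n - k)))
      (Fin (2 ^ (n - k))) ℂ)) * ρ').trace := (aux_ptrace A ρ').symm
  -- splitting identities
  have hsplit1 : (G * ρ').trace
      = ((A ⊗ₖ (1 : Matrix (Fin (2 ^ (n - k))) (Fin (2 ^ (n - k))) ℂ)) * ρ').trace
        - ((A ⊗ₖ E) * ρ').trace := by
    rw [hG, aux_kron_sub, sub_mul, trace_sub]
  have hρ'tr : ρ'.trace = 1 := by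
    rw [hρ'def, trace_mul_comm, ← mul_assoc, hU1, one_mul, hρtr]
  have hPtr : (P * ρ).trace = (((1 : Matrix (Fin (2 ^ k)) (Fin (2 ^ k)) ℂ) ⊗ₖ E)
      * ρ').trace := by
    rw [hP, tconj2]
  have hsplit2 : (G' * ρ').trace = 1 - (P * ρ).trace - (G * ρ').trace := by
    rw [hG', aux_sub_kron, sub_mul, trace_sub, ← hG, hsplit1, hPtr]
    have hone : ((1 : Matrix (Fin (2 ^ k)) (Fin (2 ^ k)) ℂ)
        ⊗ₖ ((1 : Matrix (Fin (2 ^ (n - k))) (Fin (2 ^ (n - k))) ℂ) - E)) * ρ'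
        = ρ' - ((1 : Matrix (Fin (2 ^ k)) (Fin (2 ^ k)) ℂ) ⊗ₖ E) * ρ' := by
      rw [aux_kron_sub, sub_mul, one_kronecker_one, one_mul]
    rw [hone, trace_sub, hρ'tr]
  -- realness
  have hBherm : ∀ j, (B j)ᴴ = B j := by
    intro j
    rw [hB j, conjTranspose_mul, conjTranspose_mul, conjTranspose_conjTranspose,
      aux_kron_conjT, (hQherm j).eq, conjTranspose_one, mul_assoc]
  have hWherm : Wᴴ = W := aux_vmv_herm ψ
  have him1 : ∀ j, ((B j * W).trace).im = 0 := fun j => aux_trace_real (hBherm j) hWherm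
  have him2 : ∀ j, ((B j * ρ).trace).im = 0 := fun j => aux_trace_real (hBherm j) hρ.1
  -- the sum of products of real parts
  have hsumre : ∑ j, ((B j * W).trace.re) * ((B j * ρ).trace.re)
      = ((2 ^ k : ℕ) : ℝ) * ((A * τ).trace.re) := by
    have h1 : ∀ j, ((B j * W).trace.re) * ((B j * ρ).trace.re)
        = ((B j * W).trace * (B j * ρ).trace).re := by
      intro j
      rw [Complex.mul_re, him1 j, him2 j]
      ring
    calc ∑ j, ((B j * W).trace.re) * ((B j * ρ).trace.re)
        = ∑ j, ((B j * W).trace * (B j * ρ).trace).re := Finset.sum_congr rfl fun j _ => h1 j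
      _ = (∑ j, (B j * W).trace * (B j * ρ).trace).re := (Complex.re_sum _ _).symm
      _ = (((2 ^ k : ℕ) : ℂ) * (A * τ).trace).re := by
          rw [← hsum]
          congr 1
          exact Finset.sum_congr rfl fun j _ => by rw [hBW j, hBρ j]
      _ = ((2 ^ k : ℕ) : ℝ) * ((A * τ).trace.re) := by
          simp only [Complex.mul_re, Complex.natCast_re, Complex.natCast_im, zero_mul,
            sub_zero]
  -- put everything together in ℝ
  have hNR : ((2 ^ k : ℕ) : ℝ) ≠ 0 := by positivity
  have hcre : 0 ≤ (G * ρ').trace.re := (Complex.nonneg_iff.mp hc).1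
  have hc're : 0 ≤ (G' * ρ').trace.re := (Complex.nonneg_iff.mp hc').1
  have hmain : (star ψ ⬝ᵥ (ρ *ᵥ ψ)).re -
      ((2 ^ k : ℕ) : ℝ)⁻¹ * ∑ j, ((B j * W).trace.re) * ((B j * ρ).trace.re)
      = -((G * ρ').trace.re) := by
    rw [hsumre, inv_mul_cancel_left₀ hNR, hFid]
    have h := congrArg Complex.re hsplit1
    rw [Complex.sub_re, ← hAτ] at h
    linarith
  have h2 := congrArg Complex.re hsplit2
  simp only [Complex.sub_re, Complex.one_re] at h2
  rw [hmain, abs_neg, abs_of_nonneg hcre]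
  linarith
end
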